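/- Let (X, ≤) be a root system (i.e., a poset in which the up-set ↑x = {y ∈ X : x ≤ y} is totally ordered for every x ∈ X) and let {A_x : x ∈ X} be an indexed family of totally ordered bounded commutative integral residuated lattices. Then for all antichain labelings f, g ∈ ∏_{x∈X} A_x and all x ∈ X: □(y ↦ f(y) → g(y))(x) ∨ □(y ↦ g(y) → f(y))(x) = 1. (This is the prelinearity computation underlying the fact that a poset product of MV-chains over a root system is a BL-algebra.) -/
import Mathlib


open Classical

/-- A bounded commutative integral residuated lattice. -/
class CIRL (A : Type*) extends Lattice A, CommMonoid A, OrderBot A, HImp A where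
  mul_le_iff_le_himp : ∀ x y z : A, x * y ≤ z ↔ x ≤ y ⇨ z
  le_one : ∀ x : A, x ≤ 1

/-- The operator `□` on the direct product `∏ x, A x`. -/
noncomputable def box {X : Type*} [PartialOrder X] {A : X → Type*} [∀ x, CIRL (A x)]
    (f : ∀ x, A x) : ∀ x, A x :=
  fun x => if ∀ y, x < y → f y = 1 then f x else ⊥

/-- `f` is an antichain labeling. -/
def IsACLabeling {X : Type*} [PartialOrder X] {A : X → Type*} [∀ x, CIRL (A x)]
    (f : ∀ x, A x) : Prop :=
  ∀ x y : X, x < y → f x = ⊥ ∨ f y = 1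

lemma CIRL.himp_eq_one {A : Type*} [CIRL A] {a b : A} (h : a ≤ b) : a ⇨ b = 1 :=
  le_antisymm (CIRL.le_one _)
    ((CIRL.mul_le_iff_le_himp 1 a b).mp (by rw [one_mul]; exact h))

/-- Prelinearity in the poset product: if `(X, ≤)` is a root system (every
principal up-set is totally ordered) and each factor is totally ordered, then
for all antichain labelings `f, g` and all `x`,
`□(f ⇨ g) x ⊔ □(g ⇨ f) x = 1`. -/
theorem posetProduct_prelinearity {X : Type*} [PartialOrder X]
    {A : X → Type*} [∀ x, CIRL (A x)]
    (hroot : ∀ x y z : X, x ≤ y → x ≤ z → y ≤ z ∨ z ≤ y)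
    (hlin : ∀ (x : X) (a b : A x), a ≤ b ∨ b ≤ a)
    (f g : ∀ x, A x) (hf : IsACLabeling f) (hg : IsACLabeling g) :
    ∀ x : X, box (fun y => f y ⇨ g y) x ⊔ box (fun y => g y ⇨ f y) x = 1 := by
  intro x
  -- It suffices that one of the two boxes equals 1.
  have key : box (fun y => f y ⇨ g y) x = 1 ∨ box (fun y => g y ⇨ f y) x = 1 := by
    by_cases hA : ∃ y, x < y ∧ ¬ f y ≤ g y
    · -- Case A: second box is 1.
      obtain ⟨y, hxy, hy⟩ := hA
      have hgy1 : g y ≠ 1 := fun h => hy (h ▸ CIRL.le_one _)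
      have hfyb : f y ≠ ⊥ := fun h => hy (h ▸ bot_le)
      have hgx : g x = ⊥ := (hg x y hxy).resolve_right hgy1
      right
      unfold box
      rw [if_pos]
      · exact CIRL.himp_eq_one (hgx ▸ bot_le)
      · intro z hxz
        refine CIRL.himp_eq_one ?_
        rcases hroot x y z hxy.le hxz.le with hyz | hzy
        · rcases eq_or_lt_of_le hyz with rfl | hlt
          · exact (hlin y (f y) (g y)).resolve_left hy
          · have : f z = 1 := (hf y z hlt).resolve_left hfyb
            rw [this]; exact CIRL.le_one _
        · rcases eq_or_lt_of_le hzy with rfl | hlt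
          · exact (hlin z (f z) (g z)).resolve_left hy
          · have : g z = ⊥ := (hg z y hlt).resolve_right hgy1
            rw [this]; exact bot_le
    · push_neg at hA
      by_cases hfg : f x ≤ g x
      · left
        unfold box
        rw [if_pos]
        · exact CIRL.himp_eq_one hfg
        · exact fun z hz => CIRL.himp_eq_one (hA z hz)
      · -- g x ≤ f x and f x ≠ ⊥, so f y = 1 for all y > x.
        have hgf : g x ≤ f x := (hlin x (f x) (g x)).resolve_left hfg
        have hfxb : f x ≠ ⊥ := fun h => hfg (h ▸ bot_le)
        right
        unfold box
        rw [if_pos]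
        · exact CIRL.himp_eq_one hgf
        · intro z hz
          have : f z = 1 := (hf x z hz).resolve_left hfxb
          exact CIRL.himp_eq_one (this ▸ CIRL.le_one _)
  rcases key with h | h
  · rw [h]
    exact le_antisymm (sup_le le_rfl (CIRL.le_one _)) le_sup_left
  · rw [h]
    exact le_antisymm (sup_le (CIRL.le_one _) le_rfl) le_sup_right
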